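/- Let (W,S) be a right-angled Coxeter system, w ∈ W and s ∈ S with |ws| > |w|. Then D_R(ws) = (D_R(w) ∩ C(s)) ∪ {s}, where C(s) is the set of generators commuting with s. -/

import Mathlib

/-!
In a right-angled Coxeter group, `σᵢ ↦ ((t, x) ↦ (σᵢ t σᵢ, x + [t = σᵢ]))` defines an action of
`W` on `W × ZMod 2` (the only relations to check are commutations), under which a word `ω` acts on
the second coordinate by adding the number of occurrences of `t` in its right inversion sequence.
That parity therefore depends only on `π ω`, which yields the exchange condition: a right descent
`i` of `π ω` always occurs as `σᵢ` in the right inversion sequence of `ω`.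

If `j ≠ s` are both right descents of `v = ws`, then `M j s ≠ 0` (`0` encodes `∞`): otherwise
the exchange condition peels off ever longer alternating words in `j, s` from the right of `v`,
the non-occurrence of `σⱼ`, `σₛ` in their inversion sequences being detected by a map to the
infinite dihedral group of point reflections of `ℤ`. So `σⱼ` and `σₛ` commute, and exchanging `j`
across the letter `s` shows that `j` is a right descent of `w`.
-/

def CoxeterMatrix.IsRightAngled {B : Type*} (M : CoxeterMatrix B) : Prop :=
  ∀ i j : B, i ≠ j → M i j = 2 ∨ M i j = 0

theorem CoxeterMatrix.IsRightAngled.isLiftable {B G : Type*} [Monoid G] {M : CoxeterMatrix B}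
    (hM : M.IsRightAngled) {f : B → G} (hf : ∀ i, f i * f i = 1)
    (hcomm : ∀ i j, M i j = 2 → Commute (f i) (f j)) : M.IsLiftable f := by
  intro i j
  rcases eq_or_ne i j with rfl | hij
  · rw [M.diagonal, pow_one, hf]
  rcases hM i j hij with h2 | h0
  · rw [h2, (hcomm i j h2).mul_pow, pow_two, pow_two, hf, hf, one_mul]
  · rw [h0, pow_zero]

theorem Equiv.subLeft_mul_subLeft_mul_subLeft {G : Type*} [AddCommGroup G] (a b : G) :
    Equiv.subLeft a * Equiv.subLeft b * Equiv.subLeft a = Equiv.subLeft (2 • a - b) := by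
  ext z
  simp only [Equiv.Perm.mul_apply, Equiv.subLeft_apply, two_smul]
  abel

namespace CoxeterSystem

variable {B W : Type*} [Group W] {M : CoxeterMatrix B} (cs : CoxeterSystem M W)

local prefix:100 "σ" => cs.simple
local prefix:100 "π" => cs.wordProd
local prefix:100 "ℓ" => cs.length
local prefix:100 "ris " => cs.rightInvSeq

theorem commute_simple_of_eq_two {i j : B} (h : M i j = 2) : Commute (σ i) (σ j) := by
  have h2 := cs.simple_mul_simple_pow i j
  rw [h, pow_two] at h2
  calc σ i * σ j = (σ i * σ j)⁻¹ := (inv_eq_of_mul_eq_one_right h2).symm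
    _ = σ j * σ i := by rw [mul_inv_rev, inv_simple, inv_simple]

theorem rightInvSeq_append (ω ψ : List B) :
    ris (ω ++ ψ) = (ris ω).map (MulAut.conj (π ψ)⁻¹) ++ ris ψ := by
  induction ω with
  | nil => rfl
  | cons i ω ih =>
    simp only [List.cons_append, rightInvSeq, ih, List.map_cons, MulAut.conj_apply, inv_inv,
      wordProd_append, mul_inv_rev]
    group

theorem simple_mul_mul_simple_eq_iff (i : B) (t u : W) :
    σ i * t * σ i = u ↔ t = σ i * u * σ i := by
  constructor <;> rintro rfl <;>
    simp only [← mul_assoc, simple_mul_simple_self, one_mul, simple_mul_simple_cancel_right]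

theorem simple_injective_of_isRightAngled (hM : M.IsRightAngled) :
    Function.Injective cs.simple := by
  classical
  intro i j hij
  by_contra hne
  let χ := cs.lift ⟨fun k => if k = i then (-1 : ℤˣ) else 1,
    hM.isLiftable (fun k => by split_ifs <;> simp) fun _ _ _ => Commute.all _ _⟩
  simpa [χ, lift_apply_simple, Ne.symm hne] using congrArg χ hij

section SignRepresentation

open Classical

noncomputable def signPerm (i : B) : Equiv.Perm (W × ZMod 2) :=
  Function.Involutive.toPerm (fun p => (σ i * p.1 * σ i, p.2 + if p.1 = σ i then 1 else 0))
    (by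
      rintro ⟨t, x⟩
      ext
      · exact ((cs.simple_mul_mul_simple_eq_iff i _ _).mp rfl).symm
      · simp only [cs.simple_mul_mul_simple_eq_iff, simple_mul_simple_self, one_mul,
          add_assoc, CharTwo.add_self_eq_zero, add_zero])

theorem signPerm_apply (i : B) (t : W) (x : ZMod 2) :
    cs.signPerm i (t, x) = (σ i * t * σ i, x + if t = σ i then 1 else 0) :=
  rfl

theorem commute_signPerm {i j : B} (h : Commute (σ i) (σ j)) :
    Commute (cs.signPerm i) (cs.signPerm j) := by
  have hconj : ∀ {k l}, Commute (σ k) (σ l) → σ l * σ k * σ l = σ k := fun hkl => by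
    rw [← hkl.eq, simple_mul_simple_cancel_right]
  refine Equiv.ext fun ⟨t, x⟩ => ?_
  simp only [Equiv.Perm.mul_apply, signPerm_apply, simple_mul_mul_simple_eq_iff, hconj h,
    hconj h.symm]
  ext
  · calc _ = σ i * σ j * t * (σ j * σ i) := by group
      _ = σ j * σ i * t * (σ i * σ j) := by rw [h.eq]
      _ = _ := by group
  · ring

noncomputable def signRep (hM : M.IsRightAngled) : W →* Equiv.Perm (W × ZMod 2) :=
  cs.lift ⟨cs.signPerm,
    hM.isLiftable (fun _ => Equiv.ext (Function.Involutive.toPerm_involutive _))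
    fun _ _ h => cs.commute_signPerm (cs.commute_simple_of_eq_two h)⟩

theorem signRep_simple (hM : M.IsRightAngled) (i : B) : cs.signRep hM (σ i) = cs.signPerm i :=
  cs.lift_apply_simple _ i

theorem signRep_wordProd (hM : M.IsRightAngled) (ω : List B) (t : W) (x : ZMod 2) :
    cs.signRep hM (π ω) (t, x) = (π ω * t * (π ω)⁻¹, x + (ris ω).count t) := by
  induction ω with
  | nil => simp
  | cons i ω ih =>
    have hfix : π ω * t * (π ω)⁻¹ = σ i ↔ (π ω)⁻¹ * σ i * π ω = t := by
      rw [eq_comm, ← mul_inv_eq_iff_eq_mul, ← inv_mul_eq_iff_eq_mul, ← mul_assoc, inv_inv]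
    rw [wordProd_cons, map_mul, Equiv.Perm.mul_apply, ih, signRep_simple, signPerm_apply]
    simp only [hfix]
    simp only [rightInvSeq, List.count_cons, beq_iff_eq, Nat.cast_add, Nat.cast_ite,
      Nat.cast_one, Nat.cast_zero, add_assoc, mul_inv_rev, inv_simple, mul_assoc]

theorem cast_count_rightInvSeq_eq (hM : M.IsRightAngled) {ω ω' : List B} (h : π ω = π ω')
    (t : W) : ((ris ω).count t : ZMod 2) = (ris ω').count t := by
  simpa [signRep_wordProd] using congrArg (fun w => (cs.signRep hM w (t, 0)).2) h

theorem simple_mem_rightInvSeq_of_isRightDescent (hM : M.IsRightAngled) {ω : List B} {i : B}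
    (hi : cs.IsRightDescent (π ω) i) : σ i ∈ ris ω := by
  obtain ⟨τ, hτ, hτω⟩ := cs.exists_isReduced (π ω * σ i)
  have hmap : ((ris τ).map (MulAut.conj (σ i))).count (σ i) = (ris τ).count (σ i) := by
    simpa using List.count_map_of_injective (ris τ) _ (MulAut.conj (σ i)).injective (σ i)
  have hcount : ((ris ω).count (σ i) : ZMod 2) = (ris τ).count (σ i) + 1 := by
    rw [cs.cast_count_rightInvSeq_eq hM (ω' := τ.concat i)
        (by rw [wordProd_concat, ← hτω, simple_mul_simple_cancel_right]),
      rightInvSeq_concat, List.concat_eq_append, List.count_append, hmap,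
      List.count_singleton_self, Nat.cast_add, Nat.cast_one]
  by_contra hnot
  have hmem : σ i ∈ ris τ := by
    by_contra hτnot
    rw [List.count_eq_zero.mpr hnot, List.count_eq_zero.mpr hτnot] at hcount
    exact absurd hcount (by decide)
  have hlt := (cs.isRightInversion_of_mem_rightInvSeq hτ hmem).2
  rw [← hτω, simple_mul_simple_cancel_right] at hlt
  exact lt_asymm hi hlt

end SignRepresentation

theorem length_mul_conj_lt_of_isRightDescent (hM : M.IsRightAngled) {x : W} {ψ : List B} {i : B}
    (hi : cs.IsRightDescent (x * π ψ) i) (hψ : σ i ∉ ris ψ) :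
    ℓ (x * (π ψ * σ i * (π ψ)⁻¹)) < ℓ x := by
  obtain ⟨α, hα, rfl⟩ := cs.exists_isReduced x
  rw [← wordProd_append] at hi
  have hmem := cs.simple_mem_rightInvSeq_of_isRightDescent hM hi
  rw [rightInvSeq_append, List.mem_append, or_iff_left hψ, List.mem_map] at hmem
  obtain ⟨t, ht, hconj⟩ := hmem
  obtain rfl : t = π ψ * σ i * (π ψ)⁻¹ := by
    rw [← hconj, MulAut.conj_apply]; group
  exact (cs.isRightInversion_of_mem_rightInvSeq hα ht).2

theorem exists_hom_infiniteDihedral (hM : M.IsRightAngled) {a b : B} (hab : a ≠ b)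
    (h0 : M a b = 0) :
    ∃ ρ : W →* Equiv.Perm ℤ, ρ (σ a) = Equiv.subLeft 0 ∧ ρ (σ b) = Equiv.subLeft 1 := by
  classical
  let f : B → Equiv.Perm ℤ := fun k =>
    if k = a then Equiv.subLeft 0 else if k = b then Equiv.subLeft 1 else 1
  have hf : ∀ k, f k * f k = 1 := by
    intro k; simp only [f]; split_ifs <;> ext <;> simp
  have hcomm : ∀ i j, M i j = 2 → Commute (f i) (f j) := by
    intro i j hij
    have hab' : ¬(i = a ∧ j = b) ∧ ¬(i = b ∧ j = a) := by
      constructor <;> rintro ⟨rfl, rfl⟩ <;> simp_all [M.symmetric]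
    simp only [f]
    split_ifs <;> simp_all [Commute.one_left, Commute.one_right, Commute.refl]
  refine ⟨cs.lift ⟨f, hM.isLiftable hf hcomm⟩, ?_, ?_⟩ <;>
    simp [lift_apply_simple, f, hab.symm]

theorem exists_subLeft_of_mem_rightInvSeq_alternatingWord {ρ : W →* Equiv.Perm ℤ} {a b : B}
    (ha : ρ (σ a) = Equiv.subLeft 0) (hb : ρ (σ b) = Equiv.subLeft 1) (k : ℕ) :
    (∀ t ∈ ris (alternatingWord a b k), ∃ c > 0, ρ t = Equiv.subLeft c) ∧
      ∀ t ∈ ris (alternatingWord b a k), ∃ c ≤ 0, ρ t = Equiv.subLeft c := by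
  induction k with
  | zero => simp [alternatingWord]
  | succ k ih =>
    simp only [alternatingWord_succ, rightInvSeq_concat]
    simp only [List.concat_eq_append, List.mem_append, List.mem_map, List.mem_singleton]
    constructor
    · rintro t (⟨t, ht, rfl⟩ | rfl)
      · obtain ⟨c, hc, hρ⟩ := ih.2 t ht
        refine ⟨2 - c, by omega, ?_⟩
        rw [MulAut.conj_apply, inv_simple, map_mul, map_mul, hb, hρ,
          Equiv.subLeft_mul_subLeft_mul_subLeft, two_nsmul, one_add_one_eq_two]
      · exact ⟨1, one_pos, hb⟩
    · rintro t (⟨t, ht, rfl⟩ | rfl)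
      · obtain ⟨c, hc, hρ⟩ := ih.1 t ht
        refine ⟨-c, by omega, ?_⟩
        rw [MulAut.conj_apply, inv_simple, map_mul, map_mul, ha, hρ,
          Equiv.subLeft_mul_subLeft_mul_subLeft, smul_zero, zero_sub]
      · exact ⟨0, le_rfl, ha⟩

theorem simple_not_mem_rightInvSeq_alternatingWord (hM : M.IsRightAngled) {a b : B} (hab : a ≠ b)
    (h0 : M a b = 0) (k : ℕ) : σ a ∉ ris (alternatingWord a b k) := by
  obtain ⟨ρ, ha, hb⟩ := cs.exists_hom_infiniteDihedral hM hab h0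
  intro hmem
  obtain ⟨c, hc, hρ⟩ := (cs.exists_subLeft_of_mem_rightInvSeq_alternatingWord ha hb k).1 _ hmem
  have := congrArg (· 0) (ha.symm.trans hρ)
  simp only [Equiv.subLeft_apply, sub_zero] at this
  omega

theorem not_isRightDescent_and_isRightDescent_of_eq_zero (hM : M.IsRightAngled) {a b : B}
    (hab : a ≠ b) (h0 : M a b = 0) (v : W) :
    ¬(cs.IsRightDescent v a ∧ cs.IsRightDescent v b) := by
  rintro ⟨ha, hb⟩
  suffices h : ∀ k (a b : B), a ≠ b → M a b = 0 → cs.IsRightDescent v a →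
      cs.IsRightDescent v b → ℓ (v * (π (alternatingWord a b k))⁻¹) + k ≤ ℓ v by
    have := h (ℓ v + 1) a b hab h0 ha hb
    omega
  intro k
  induction k with
  | zero => simp [alternatingWord]
  | succ k ih =>
    intro a b hab h0 ha hb
    have hlt := cs.length_mul_conj_lt_of_isRightDescent hM
      (x := v * (π (alternatingWord b a k))⁻¹) (ψ := alternatingWord b a k)
      (by rwa [inv_mul_cancel_right]) (cs.simple_not_mem_rightInvSeq_alternatingWord hM hab.symm
        (by rwa [M.symmetric]) k)
    have hle := ih b a hab.symm (by rwa [M.symmetric]) hb ha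
    rw [alternatingWord_succ, wordProd_concat]
    rw [show ∀ y : W, v * y⁻¹ * (y * σ b * y⁻¹) = v * (y * σ b)⁻¹ from fun y => by
      rw [mul_inv_rev, inv_simple]; group] at hlt
    omega

theorem commute_simple_of_isRightDescent (hM : M.IsRightAngled) {a b : B} (hab : a ≠ b) {v : W}
    (ha : cs.IsRightDescent v a) (hb : cs.IsRightDescent v b) : Commute (σ a) (σ b) := by
  rcases hM a b hab with h2 | h0
  · exact cs.commute_simple_of_eq_two h2
  · exact (cs.not_isRightDescent_and_isRightDescent_of_eq_zero hM hab h0 v ⟨ha, hb⟩).elim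

theorem isRightDescent_of_isRightDescent_mul_simple (hM : M.IsRightAngled) {w : W} {i j : B}
    (hij : i ≠ j) (hc : Commute (σ i) (σ j)) (hi : cs.IsRightDescent (w * σ j) i) :
    cs.IsRightDescent w i := by
  have hlt := cs.length_mul_conj_lt_of_isRightDescent hM (x := w) (ψ := [j])
    (by rwa [wordProd_singleton]) (by simpa using (cs.simple_injective_of_isRightAngled hM).ne hij)
  rwa [wordProd_singleton, inv_simple, ← hc.eq, mul_assoc, simple_mul_simple_self, mul_one] at hlt

theorem isRightDescent_mul_simple_of_commute {w : W} {i j : B} (hc : Commute (σ i) (σ j))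
    (hi : cs.IsRightDescent w i) (hj : ℓ w < ℓ (w * σ j)) :
    cs.IsRightDescent (w * σ j) i := by
  have hle := cs.length_mul_le (w * σ i) (σ j)
  rw [length_simple, mul_assoc, hc.eq, ← mul_assoc] at hle
  unfold IsRightDescent at hi ⊢
  omega

end CoxeterSystem

/-- Let `(W,S)` be a right-angled Coxeter system, `w ∈ W` and `s ∈ S` with `|ws| > |w|`.
Then `D_R(ws) = (D_R(w) ∩ C(s)) ∪ {s}`. -/
theorem right_angled_rightDescent_mul_simple
    {B W : Type*} [Group W] (M : CoxeterMatrix B) (cs : CoxeterSystem M W)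
    (rightAngled : ∀ i j : B, i ≠ j → M i j = 2 ∨ M i j = 0)
    (w : W) (s : B) (h : cs.length w < cs.length (w * cs.simple s)) :
    {j : B | cs.IsRightDescent (w * cs.simple s) j} =
      ({j : B | cs.IsRightDescent w j} ∩
        {j : B | cs.simple j * cs.simple s = cs.simple s * cs.simple j}) ∪ {s} := by
  have hs : cs.IsRightDescent (w * cs.simple s) s := by
    rw [cs.isRightDescent_iff_not_isRightDescent_mul, cs.simple_mul_simple_cancel_right]
    exact lt_asymm h
  ext j
  simp only [Set.mem_union, Set.mem_inter_iff, Set.mem_ofPred_eq, Set.mem_singleton_iff]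
  constructor
  · intro hj
    refine or_iff_not_imp_right.mpr fun hjs => ?_
    have hc := cs.commute_simple_of_isRightDescent rightAngled hjs hj hs
    exact ⟨cs.isRightDescent_of_isRightDescent_mul_simple rightAngled hjs hc hj, hc.eq⟩
  · rintro (⟨hj, hc⟩ | rfl)
    · exact cs.isRightDescent_mul_simple_of_commute hc hj h
    · exact hs
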